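/- arXiv:2410.05998 — 2 statements merged into one kernel-verified Lean document; each statement's English description precedes it below -/
import Mathlib

section
/- Let k be a commutative ring, M, N k-modules, and m ≥ 1. The k-linear map τ : (M ⊗ N)^{⊗m} → (N ⊗ M)^{⊗m} obtained by rewriting M⊗N⊗M⊗N⊗...⊗M⊗N as M⊗(N⊗...⊗N) and cyclically moving the first M factor to the end is an isomorphism of k-modules, and it is C_m-equivariant for the cyclic permutation actions on both sides. -/
open scoped TensorProduct

/-!
Splitting `⨂ᵢ (A ⊗ B) ≃ (⨂ᵢ A) ⊗ (⨂ᵢ B)`, which holds for every finite index type by induction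
along `Option`, identifies both sides of `τ` with `(⨂ᵢ M) ⊗ (⨂ᵢ N)` up to the symmetry of `⊗`;
`τ` is then just the reindexing of the `M`-factors by the rotation `σ`. Equivariance holds for
any permutation `σ` and is checked on pure tensors, where both composites send `⨂ᵢ (aᵢ ⊗ bᵢ)` to
`⨂ᵢ (b_{σ⁻¹ i} ⊗ aᵢ)`.
-/

universe u

namespace PiTensorProduct

variable (k : Type*) [CommSemiring k] (A B : Type*)
  [AddCommMonoid A] [Module k A] [AddCommMonoid B] [Module k B]

def HasTmulDistrib (ι : Type*) : Prop :=
  ∃ e : (⨂[k] _ : ι, A ⊗[k] B) ≃ₗ[k] (⨂[k] _ : ι, A) ⊗[k] (⨂[k] _ : ι, B),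
    ∀ (a : ι → A) (b : ι → B), e (⨂ₜ[k] i, a i ⊗ₜ b i) = (⨂ₜ[k] i, a i) ⊗ₜ (⨂ₜ[k] i, b i)

variable {k A B}

theorem hasTmulDistrib_of_isEmpty (ι : Type*) [IsEmpty ι] : HasTmulDistrib k A B ι :=
  ⟨(isEmptyEquiv ι).trans <| (TensorProduct.lid k k).symm.trans <|
      TensorProduct.congr (isEmptyEquiv ι).symm (isEmptyEquiv ι).symm,
    fun a b => by
      simp only [LinearEquiv.trans_apply, isEmptyEquiv_apply_tprod, TensorProduct.lid_symm_apply,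
        TensorProduct.congr_tmul, isEmptyEquiv_symm_apply, one_smul]
      congr <;> exact Subsingleton.elim _ _⟩

theorem hasTmulDistrib_of_unique (ι : Type*) [Unique ι] : HasTmulDistrib k A B ι :=
  ⟨(subsingletonEquiv default).trans <| TensorProduct.congr
      (subsingletonEquiv (s := fun _ : ι => A) default).symm
      (subsingletonEquiv (s := fun _ : ι => B) default).symm,
    fun a b => by
      simp only [LinearEquiv.trans_apply, subsingletonEquiv_apply_tprod, TensorProduct.congr_tmul,
        subsingletonEquiv_symm_apply']
      congr 2 <;> funext i <;> rw [Subsingleton.elim i default]⟩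

theorem HasTmulDistrib.of_equiv {ι ι' : Type*} (σ : ι ≃ ι') (h : HasTmulDistrib k A B ι) :
    HasTmulDistrib k A B ι' := by
  obtain ⟨e, he⟩ := h
  refine ⟨(reindex k _ σ.symm).trans <| e.trans <|
      TensorProduct.congr (reindex k _ σ) (reindex k _ σ), fun a b => ?_⟩
  simp [reindex_tprod, he]

theorem HasTmulDistrib.sum {ι ι' : Type*} (h : HasTmulDistrib k A B ι)
    (h' : HasTmulDistrib k A B ι') : HasTmulDistrib k A B (ι ⊕ ι') := by
  obtain ⟨e, he⟩ := h
  obtain ⟨e', he'⟩ := h'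
  refine ⟨(tmulEquiv k _).symm.trans <| (TensorProduct.congr e e').trans <|
      (TensorProduct.tensorTensorTensorComm k _ _ _ _).trans <|
      TensorProduct.congr (tmulEquiv k A) (tmulEquiv k B), fun a b => ?_⟩
  simp only [LinearEquiv.trans_apply, tmulEquiv_symm_apply, TensorProduct.congr_tmul, he, he',
    TensorProduct.tensorTensorTensorComm_tmul, tmulEquiv_apply]
  congr 2 <;> funext i <;> cases i <;> rfl

theorem hasTmulDistrib (ι : Type u) [Finite ι] : HasTmulDistrib k A B ι :=
  Finite.induction_empty_option (fun σ h => h.of_equiv σ) (hasTmulDistrib_of_isEmpty _)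
    (fun h => (h.sum (hasTmulDistrib_of_unique PUnit.{u + 1})).of_equiv
      (Equiv.optionEquivSumPUnit _).symm) ι

theorem ext_tprod_tmul {ι C : Type*} [Finite ι] [AddCommMonoid C] [Module k C]
    {φ ψ : (⨂[k] _ : ι, A ⊗[k] B) →ₗ[k] C}
    (h : ∀ (a : ι → A) (b : ι → B), φ (⨂ₜ[k] i, a i ⊗ₜ b i) = ψ (⨂ₜ[k] i, a i ⊗ₜ b i)) :
    φ = ψ := by
  have hspan : Submodule.span k (Set.range fun p : A × B => p.1 ⊗ₜ[k] p.2) = ⊤ := by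
    convert TensorProduct.span_tmul_eq_top k A B
    ext; simp [eq_comm]
  exact ext_of_span_eq_top (γ := fun _ => A × B) (g := fun _ p => p.1 ⊗ₜ[k] p.2)
    (fun _ => hspan) fun j => h (fun i => (j i).1) (fun i => (j i).2)

theorem exists_tprod_tmul_perm_equiv {ι : Type*} [Finite ι] (σ : Equiv.Perm ι) :
    ∃ τ : (⨂[k] _ : ι, A ⊗[k] B) ≃ₗ[k] ⨂[k] _ : ι, B ⊗[k] A,
      ∀ (a : ι → A) (b : ι → B), τ (⨂ₜ[k] i, a i ⊗ₜ b i) = ⨂ₜ[k] i, b i ⊗ₜ a (σ i) := by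
  obtain ⟨e, he⟩ := hasTmulDistrib (k := k) (A := A) (B := B) ι
  obtain ⟨e', he'⟩ := hasTmulDistrib (k := k) (A := B) (B := A) ι
  refine ⟨e.trans <| (TensorProduct.congr (reindex k _ σ.symm) (LinearEquiv.refl k _)).trans <|
      (TensorProduct.comm k _ _).trans e'.symm, fun a b => ?_⟩
  simp [he, he', reindex_tprod, LinearEquiv.symm_apply_eq]

theorem reindex_comm_of_tprod_tmul {ι : Type*} [Finite ι] (σ : Equiv.Perm ι)
    {τ : (⨂[k] _ : ι, A ⊗[k] B) →ₗ[k] ⨂[k] _ : ι, B ⊗[k] A}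
    (hτ : ∀ (a : ι → A) (b : ι → B), τ (⨂ₜ[k] i, a i ⊗ₜ b i) = ⨂ₜ[k] i, b i ⊗ₜ a (σ i))
    (x : ⨂[k] _ : ι, A ⊗[k] B) :
    τ (reindex k _ σ x) = reindex k _ σ (τ x) := by
  have : τ ∘ₗ (reindex k _ σ).toLinearMap = (reindex k _ σ).toLinearMap ∘ₗ τ :=
    ext_tprod_tmul fun a b => by simp [reindex_tprod, hτ]
  exact LinearMap.congr_fun this x

end PiTensorProduct

theorem rotation_iso_equivariant_general (k : Type*) [CommRing k] (M N : Type*)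
    [AddCommGroup M] [Module k M] [AddCommGroup N] [Module k N] (m : ℕ) :
    ∃ τ : (⨂[k] _i : Fin m, (M ⊗[k] N)) ≃ₗ[k] (⨂[k] _i : Fin m, (N ⊗[k] M)),
      (∀ (a : Fin m → M) (b : Fin m → N),
        τ (⨂ₜ[k] i, (a i ⊗ₜ[k] b i)) = ⨂ₜ[k] i, (b i ⊗ₜ[k] a (finRotate m i))) ∧
      (∀ x : ⨂[k] _i : Fin m, (M ⊗[k] N),
        τ ((PiTensorProduct.reindex k (fun _ : Fin m => (M ⊗[k] N)) (finRotate m)) x)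
          = (PiTensorProduct.reindex k (fun _ : Fin m => (N ⊗[k] M)) (finRotate m)) (τ x)) := by
  obtain ⟨τ, hτ⟩ :=
    PiTensorProduct.exists_tprod_tmul_perm_equiv (k := k) (A := M) (B := N) (finRotate m)
  exact ⟨τ, hτ, PiTensorProduct.reindex_comm_of_tprod_tmul (finRotate m) (τ := τ.toLinearMap) hτ⟩

/-- for `k`-modules `M, N` and `m ≥ 1`, the rotation map
`τ : (M ⊗ N)^{⊗m} → (N ⊗ M)^{⊗m}`,
`(m_1⊗n_1)⊗⋯⊗(m_m⊗n_m) ↦ (n_1⊗m_2)⊗(n_2⊗m_3)⊗⋯⊗(n_m⊗m_1)`,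
is a `k`-linear isomorphism and is equivariant for the cyclic permutation `C_m`-actions on
the tensor factors of both sides. -/
theorem rotation_iso_equivariant (k : Type*) [CommRing k] (M N : Type*)
    [AddCommGroup M] [Module k M] [AddCommGroup N] [Module k N] (m : ℕ) (hm : 1 ≤ m) :
    ∃ τ : (⨂[k] _i : Fin m, (M ⊗[k] N)) ≃ₗ[k] (⨂[k] _i : Fin m, (N ⊗[k] M)),
      (∀ (a : Fin m → M) (b : Fin m → N),
        τ (⨂ₜ[k] i, (a i ⊗ₜ[k] b i)) = ⨂ₜ[k] i, (b i ⊗ₜ[k] a (finRotate m i))) ∧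
      (∀ x : ⨂[k] _i : Fin m, (M ⊗[k] N),
        τ ((PiTensorProduct.reindex k (fun _ : Fin m => (M ⊗[k] N)) (finRotate m)) x)
          = (PiTensorProduct.reindex k (fun _ : Fin m => (N ⊗[k] M)) (finRotate m)) (τ x)) :=
  rotation_iso_equivariant_general k M N m
end

section
/- Let k be a commutative ring, m ≥ 1, and for finite free k-modules M define T(M) = (M^{⊗m})_{C_m}, the coinvariants of the cyclic permutation action on the m-fold tensor power. Then the isomorphisms τ_{M,N} : T(M ⊗ N) → T(N ⊗ M) induced by cyclic rotation satisfy the trace theory axioms: τ_{k,M} = id (under the unit identifications k ⊗ M ≅ M ≅ M ⊗ k), and for all L, M, N the cyclicity relation τ_{L, M⊗N} ∘ τ_{N, L⊗M} ∘ τ_{M, N⊗L} = id holds (under associativity identifications). -/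
open scoped TensorProduct

variable (k : Type*) [CommRing k]

/-- The submodule of the `m`-fold tensor power generated by `y - σy`, where `σ` is the cyclic
permutation of tensor factors; the quotient by it is the `C_m`-coinvariants. -/
noncomputable def coinvSub (A : Type*) [AddCommGroup A] [Module k A] (m : ℕ) :
    Submodule k (⨂[k] _i : Fin m, A) :=
  Submodule.span k
    {x | ∃ y, x = y - (PiTensorProduct.reindex k (fun _ : Fin m => A) (finRotate m)) y}

/-- `T(A) = (A^{⊗m})_{C_m}`, the coinvariants of the cyclic action on the tensor power. -/
noncomputable abbrev Tcoinv (A : Type*) [AddCommGroup A] [Module k A] (m : ℕ) :=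
  (⨂[k] _i : Fin m, A) ⧸ coinvSub k A m

/-!
The rotation `⨂ᵢ (aᵢ ⊗ bᵢ) ↦ ⨂ᵢ (bᵢ ⊗ a_{σ i})` on `(A ⊗ B)^{⊗m}` is the composite
`(A ⊗ B)^{⊗m} → A^{⊗m} ⊗ B^{⊗m} → B^{⊗m} ⊗ A^{⊗m} → (B ⊗ A)^{⊗m}`, in which the `A`-factor is
reindexed by the cyclic shift `σ`. It commutes with `σ`, hence descends to the coinvariants, and
both axioms can be checked on pure tensors. Going around `L, M, N` three times shifts every
factor by `σ`, which is invisible in the coinvariants; for the unit, the scalars `c_{σ i}` have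
the same product as the `cᵢ`.
-/

open PiTensorProduct

namespace TensorProduct
variable {k} {A B C : Type*} [AddCommGroup A] [Module k A]
  [AddCommGroup B] [Module k B] [AddCommGroup C] [Module k C]

theorem span_range_tmul_eq_top :
    Submodule.span k (Set.range fun p : A × B => p.1 ⊗ₜ[k] p.2) = ⊤ := by
  convert span_tmul_eq_top k A B
  ext
  simp

theorem span_range_tmul_tmul_eq_top :
    Submodule.span k (Set.range fun p : A × B × C => p.1 ⊗ₜ[k] (p.2.1 ⊗ₜ[k] p.2.2)) = ⊤ := by
  refine Submodule.eq_top_iff'.2 fun x => ?_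
  induction x using TensorProduct.induction_on with
  | zero => exact zero_mem _
  | add x y hx hy => exact add_mem hx hy
  | tmul a y =>
    induction y using TensorProduct.induction_on with
    | zero => simp
    | add y z hy hz => rw [tmul_add]; exact add_mem hy hz
    | tmul b c => exact Submodule.subset_span ⟨(a, b, c), rfl⟩

end TensorProduct

namespace TensorPower
variable {k} {A B : Type*} [AddCommGroup A] [Module k A] [AddCommGroup B] [Module k B]

noncomputable def snocEquiv (n : ℕ) : ⨂[k]^(n + 1) A ≃ₗ[k] ⨂[k]^n A ⊗[k] A :=
  mulEquiv.symm.trans (LinearEquiv.lTensor _ (subsingletonEquiv 0))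

@[simp] theorem snocEquiv_tprod (n : ℕ) (f : Fin (n + 1) → A) :
    snocEquiv n (⨂ₜ[k] i, f i) = (⨂ₜ[k] i, Fin.init f i) ⊗ₜ f (Fin.last n) := by
  simp only [snocEquiv, mulEquiv, LinearEquiv.trans_symm, reindex_symm, LinearEquiv.trans_apply,
    reindex_tprod, Equiv.symm_symm, tmulEquiv_symm_apply, finSumFinEquiv_apply_left,
    finSumFinEquiv_apply_right, LinearEquiv.lTensor_tmul, subsingletonEquiv_apply_tprod]
  rfl

@[simp] theorem snocEquiv_symm_tmul (n : ℕ) (f : Fin n → A) (x : A) :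
    (snocEquiv n).symm ((⨂ₜ[k] i, f i) ⊗ₜ x) = ⨂ₜ[k] i, (Fin.snoc f x : Fin (n + 1) → A) i := by
  rw [LinearEquiv.symm_apply_eq, snocEquiv_tprod, Fin.init_snoc, Fin.snoc_last]

variable (k A B) in
noncomputable def distrib : (n : ℕ) → ⨂[k]^n (A ⊗[k] B) →ₗ[k] ⨂[k]^n A ⊗[k] ⨂[k]^n B
  | 0 => (isEmptyEquiv (Fin 0)).toLinearMap.smulRight
      ((⨂ₜ[k] i, Fin.elim0 i) ⊗ₜ (⨂ₜ[k] i, Fin.elim0 i))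
  | n + 1 => TensorProduct.map (snocEquiv n).symm.toLinearMap (snocEquiv n).symm.toLinearMap ∘ₗ
      (TensorProduct.tensorTensorTensorComm k _ _ _ _).toLinearMap ∘ₗ
      (distrib n).rTensor _ ∘ₗ (snocEquiv n).toLinearMap

theorem distrib_tprod : ∀ (n : ℕ) (a : Fin n → A) (b : Fin n → B),
    distrib k A B n (⨂ₜ[k] i, a i ⊗ₜ b i) = (⨂ₜ[k] i, a i) ⊗ₜ (⨂ₜ[k] i, b i)
  | 0, a, b => by
    simp [distrib, isEmptyEquiv_apply_tprod, Subsingleton.elim a Fin.elim0,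
      Subsingleton.elim b Fin.elim0]
  | n + 1, a, b => by
    have hinit : Fin.init (fun i => a i ⊗ₜ[k] b i) = fun i => Fin.init a i ⊗ₜ Fin.init b i := rfl
    simp [distrib, hinit, distrib_tprod n, Fin.snoc_init_self]

variable (k A B) in
noncomputable def rotate (m : ℕ) : ⨂[k]^m (A ⊗[k] B) →ₗ[k] ⨂[k]^m (B ⊗[k] A) :=
  TensorProduct.lift (map₂ fun _ => TensorProduct.mk k B A) ∘ₗ
    (TensorProduct.comm k _ _).toLinearMap ∘ₗ
    (reindex k (fun _ => A) (finRotate m).symm).toLinearMap.rTensor _ ∘ₗ distrib k A B m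

theorem rotate_tprod (m : ℕ) (a : Fin m → A) (b : Fin m → B) :
    rotate k A B m (⨂ₜ[k] i, a i ⊗ₜ b i) = ⨂ₜ[k] i, b i ⊗ₜ a (finRotate m i) := by
  simp [rotate, distrib_tprod, map₂_tprod_tprod]

theorem rotate_reindex_finRotate (m : ℕ) (x : ⨂[k]^m (A ⊗[k] B)) :
    rotate k A B m (reindex k _ (finRotate m) x) =
      reindex k _ (finRotate m) (rotate k A B m x) := by
  have hcomm := ext_of_span_eq_top (R := k) (g := fun _ (p : A × B) => p.1 ⊗ₜ[k] p.2)
    (fun _ => TensorProduct.span_range_tmul_eq_top)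
    (φ := rotate k A B m ∘ₗ (reindex k _ (finRotate m)).toLinearMap)
    (φ' := (reindex k _ (finRotate m)).toLinearMap ∘ₗ rotate k A B m) fun p => by
      simp only [LinearMap.coe_comp, Function.comp_apply, LinearEquiv.coe_coe, reindex_tprod,
        rotate_tprod, Equiv.apply_symm_apply, Equiv.symm_apply_apply]
  exact LinearMap.congr_fun hcomm x

end TensorPower

namespace Tcoinv
variable {k} {A B C : Type*} [AddCommGroup A] [Module k A] [AddCommGroup B] [Module k B]
  [AddCommGroup C] [Module k C]

theorem mk_reindex_finRotate (m : ℕ) (x : ⨂[k] _ : Fin m, A) :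
    (Submodule.Quotient.mk (reindex k _ (finRotate m) x) : Tcoinv k A m) =
      Submodule.Quotient.mk x := by
  rw [eq_comm, Submodule.Quotient.eq]
  exact Submodule.subset_span ⟨x, rfl⟩

theorem mk_tprod_finRotate (m : ℕ) (x : Fin m → A) :
    (Submodule.Quotient.mk (⨂ₜ[k] i, x (finRotate m i)) : Tcoinv k A m) =
      Submodule.Quotient.mk (⨂ₜ[k] i, x i) := by
  rw [← mk_reindex_finRotate, reindex_tprod]
  simp only [Equiv.apply_symm_apply]

theorem mk_tprod_smul_finRotate (m : ℕ) (c : Fin m → k) (x : Fin m → A) :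
    (Submodule.Quotient.mk (⨂ₜ[k] i, c (finRotate m i) • x i) : Tcoinv k A m) =
      Submodule.Quotient.mk (⨂ₜ[k] i, c i • x i) := by
  rw [MultilinearMap.map_smul_univ, MultilinearMap.map_smul_univ,
    Equiv.prod_comp (finRotate m) c]

theorem hom_ext {m : ℕ} {Q γ : Type*} [AddCommGroup Q] [Module k Q] {g : γ → A}
    (hg : Submodule.span k (Set.range g) = ⊤) {φ ψ : Tcoinv k A m →ₗ[k] Q}
    (h : ∀ x : Fin m → γ, φ (Submodule.Quotient.mk (⨂ₜ[k] i, g (x i))) =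
      ψ (Submodule.Quotient.mk (⨂ₜ[k] i, g (x i)))) : φ = ψ :=
  Submodule.linearMap_qext _ (ext_of_span_eq_top (g := fun _ => g) (fun _ => hg) h)

noncomputable def map (m : ℕ) (g : (⨂[k] _ : Fin m, A) →ₗ[k] ⨂[k] _ : Fin m, B)
    (hg : ∀ x, g (reindex k _ (finRotate m) x) = reindex k _ (finRotate m) (g x)) :
    Tcoinv k A m →ₗ[k] Tcoinv k B m :=
  Submodule.mapQ _ _ g <| Submodule.span_le.2 <| by
    rintro _ ⟨y, rfl⟩
    exact Submodule.subset_span ⟨g y, by simp [hg]⟩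

@[simp] theorem map_mk (m : ℕ) (g : (⨂[k] _ : Fin m, A) →ₗ[k] ⨂[k] _ : Fin m, B) (hg)
    (x : ⨂[k] _ : Fin m, A) :
    map m g hg (Submodule.Quotient.mk x) = Submodule.Quotient.mk (g x) :=
  rfl

noncomputable def lmap (m : ℕ) (f : A →ₗ[k] B) : Tcoinv k A m →ₗ[k] Tcoinv k B m :=
  map m (PiTensorProduct.map fun _ => f) (map_reindex (fun _ => f) (finRotate m))

@[simp] theorem lmap_mk (m : ℕ) (f : A →ₗ[k] B) (x : Fin m → A) :
    lmap m f (Submodule.Quotient.mk (⨂ₜ[k] i, x i)) = Submodule.Quotient.mk (⨂ₜ[k] i, f (x i)) := by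
  simp [lmap]

variable (k A B) in
noncomputable def tau (m : ℕ) : Tcoinv k (A ⊗[k] B) m →ₗ[k] Tcoinv k (B ⊗[k] A) m :=
  map m (TensorPower.rotate k A B m) (TensorPower.rotate_reindex_finRotate m)

theorem tau_mk (m : ℕ) (a : Fin m → A) (b : Fin m → B) :
    tau k A B m (Submodule.Quotient.mk (⨂ₜ[k] i, a i ⊗ₜ b i)) =
      Submodule.Quotient.mk (⨂ₜ[k] i, b i ⊗ₜ a (finRotate m i)) := by
  simp [tau, TensorPower.rotate_tprod]

variable (k A B C) in
noncomputable def tauAssoc (m : ℕ) :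
    Tcoinv k (A ⊗[k] (B ⊗[k] C)) m →ₗ[k] Tcoinv k (B ⊗[k] (C ⊗[k] A)) m :=
  lmap m (TensorProduct.assoc k B C A).toLinearMap ∘ₗ tau k A (B ⊗[k] C) m

theorem tauAssoc_mk (m : ℕ) (a : Fin m → A) (b : Fin m → B) (c : Fin m → C) :
    tauAssoc k A B C m (Submodule.Quotient.mk (⨂ₜ[k] i, a i ⊗ₜ (b i ⊗ₜ c i))) =
      Submodule.Quotient.mk (⨂ₜ[k] i, b i ⊗ₜ (c i ⊗ₜ a (finRotate m i))) := by
  simp [tauAssoc, tau_mk]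

end Tcoinv

theorem coinv_trace_theory_axioms (m : ℕ)
    (L M N : Type*) [AddCommGroup L] [Module k L]
    [AddCommGroup M] [Module k M]
    [AddCommGroup N] [Module k N] :
    -- Unity: `τ_{k,M}` is the identity under the unit identifications
    (∃ (τ : Tcoinv k (k ⊗[k] M) m →ₗ[k] Tcoinv k (M ⊗[k] k) m)
       (e₁ : Tcoinv k (k ⊗[k] M) m →ₗ[k] Tcoinv k M m)
       (e₂ : Tcoinv k (M ⊗[k] k) m →ₗ[k] Tcoinv k M m),
      (∀ (c : Fin m → k) (x : Fin m → M),
        τ (Submodule.Quotient.mk (⨂ₜ[k] i, (c i ⊗ₜ[k] x i)))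
          = Submodule.Quotient.mk (⨂ₜ[k] i, (x i ⊗ₜ[k] c (finRotate m i)))) ∧
      (∀ (c : Fin m → k) (x : Fin m → M),
        e₁ (Submodule.Quotient.mk (⨂ₜ[k] i, (c i ⊗ₜ[k] x i)))
          = Submodule.Quotient.mk (⨂ₜ[k] i, c i • x i)) ∧
      (∀ (c : Fin m → k) (x : Fin m → M),
        e₂ (Submodule.Quotient.mk (⨂ₜ[k] i, (x i ⊗ₜ[k] c i)))
          = Submodule.Quotient.mk (⨂ₜ[k] i, c i • x i)) ∧
      e₂.comp τ = e₁) ∧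
    -- Cyclicity: `τ_{L,M,N} ∘ τ_{N,L,M} ∘ τ_{M,N,L} = id`
    (∃ (τ₁ : Tcoinv k (M ⊗[k] (N ⊗[k] L)) m →ₗ[k] Tcoinv k (N ⊗[k] (L ⊗[k] M)) m)
       (τ₂ : Tcoinv k (N ⊗[k] (L ⊗[k] M)) m →ₗ[k] Tcoinv k (L ⊗[k] (M ⊗[k] N)) m)
       (τ₃ : Tcoinv k (L ⊗[k] (M ⊗[k] N)) m →ₗ[k] Tcoinv k (M ⊗[k] (N ⊗[k] L)) m),
      (∀ (a : Fin m → M) (b : Fin m → N) (c : Fin m → L),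
        τ₁ (Submodule.Quotient.mk (⨂ₜ[k] i, (a i ⊗ₜ[k] (b i ⊗ₜ[k] c i))))
          = Submodule.Quotient.mk (⨂ₜ[k] i, (b i ⊗ₜ[k] (c i ⊗ₜ[k] a (finRotate m i))))) ∧
      (∀ (b : Fin m → N) (c : Fin m → L) (a : Fin m → M),
        τ₂ (Submodule.Quotient.mk (⨂ₜ[k] i, (b i ⊗ₜ[k] (c i ⊗ₜ[k] a i))))
          = Submodule.Quotient.mk (⨂ₜ[k] i, (c i ⊗ₜ[k] (a i ⊗ₜ[k] b (finRotate m i))))) ∧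
      (∀ (c : Fin m → L) (a : Fin m → M) (b : Fin m → N),
        τ₃ (Submodule.Quotient.mk (⨂ₜ[k] i, (c i ⊗ₜ[k] (a i ⊗ₜ[k] b i))))
          = Submodule.Quotient.mk (⨂ₜ[k] i, (a i ⊗ₜ[k] (b i ⊗ₜ[k] c (finRotate m i))))) ∧
      τ₃.comp (τ₂.comp τ₁) = LinearMap.id) := by
  open Tcoinv in
  refine ⟨⟨tau k k M m, lmap m (TensorProduct.lid k M).toLinearMap,
      lmap m (TensorProduct.rid k M).toLinearMap, tau_mk m, by simp, by simp, ?_⟩,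
    ⟨tauAssoc k M N L m, tauAssoc k N L M m, tauAssoc k L M N m,
      tauAssoc_mk m, tauAssoc_mk m, tauAssoc_mk m, ?_⟩⟩
  · refine hom_ext TensorProduct.span_range_tmul_eq_top fun p => ?_
    simp only [LinearMap.comp_apply, tau_mk, lmap_mk, LinearEquiv.coe_coe,
      TensorProduct.rid_tmul, TensorProduct.lid_tmul]
    exact mk_tprod_smul_finRotate m (fun i => (p i).1) fun i => (p i).2
  · refine hom_ext TensorProduct.span_range_tmul_tmul_eq_top fun p => ?_
    simp only [LinearMap.comp_apply, tauAssoc_mk, LinearMap.id_apply]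
    exact mk_tprod_finRotate m fun i => (p i).1 ⊗ₜ ((p i).2.1 ⊗ₜ (p i).2.2)
end
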